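/- Let μ ∈ ℝ, σ > 0, and τ ≥ 0. Let X₁, X₂ ~ N(μ, σ²) and Y₁, Y₂ ~ N(−μ, σ²) be mutually independent, and let X_{i,t} = f_t(X_i; τ), Y_{i,t} = f_t(Y_i; τ). With α = Φ((−τ − μ)/σ) and β = Φ((−τ + μ)/σ), the discrimination D_t = E[(X_{1,t} − Y_{1,t})²] / (E[(X_{1,t} − X_{2,t})²] + E[(Y_{1,t} − Y_{2,t})²]) equals (α + α² − 2αβ + β + β²) / (2(α − α² + 2αβ + β − β²)). -/

import Mathlib

open MeasureTheory ProbabilityTheory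

/-!
For `τ ≥ 0` we have `f_t = 1_{(τ,∞)} - 1_{(-∞,-τ)}` and `f_t² = 1_{(τ,∞)} + 1_{(-∞,-τ)}`, so for
`Z ~ N(m, σ²)` the quantized variable has mean `p - q` and second moment `p + q`, where
`p = Φ((m - τ)/σ)` and `q = Φ((-τ - m)/σ)`. For independent `Z, W` this gives
`E[(f_t Z - f_t W)²] = E[f_t(Z)²] + E[f_t(W)²] - 2 E[f_t Z] E[f_t W]`. For `N(μ, σ²)` we get
`(p, q) = (β, α)` and for `N(-μ, σ²)` we get `(p, q) = (α, β)`; the three expectations are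
then polynomials in `α, β`, and the common factor 2 cancels in the quotient.
-/

/-- The cumulative distribution function `Φ` of the standard normal distribution. -/
noncomputable def stdNormalCDF (x : ℝ) : ℝ :=
  ((ProbabilityTheory.gaussianReal 0 1) (Set.Iic x)).toReal

/-- Ternary quantization with threshold `τ ≥ 0`: `1` if `x > τ`, `-1` if `x < -τ`,
`0` otherwise. -/
noncomputable def ft (τ x : ℝ) : ℝ := if x > τ then 1 else if x < -τ then -1 else 0

open Set

lemma measurable_ft (τ : ℝ) : Measurable (ft τ) :=
  Measurable.ite measurableSet_Ioi measurable_const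
    (Measurable.ite measurableSet_Iio measurable_const measurable_const)

lemma abs_ft_le_one (τ x : ℝ) : |ft τ x| ≤ 1 := by
  unfold ft; split_ifs <;> simp

lemma ft_eq_indicator_sub {τ : ℝ} (hτ : 0 ≤ τ) (x : ℝ) :
    ft τ x = (Ioi τ).indicator 1 x - (Iio (-τ)).indicator 1 x := by
  simp only [ft, indicator_apply, mem_Ioi, mem_Iio, Pi.one_apply]
  split_ifs <;> norm_num
  linarith

lemma ft_sq_eq_indicator_add {τ : ℝ} (hτ : 0 ≤ τ) (x : ℝ) :
    ft τ x ^ 2 = (Ioi τ).indicator 1 x + (Iio (-τ)).indicator 1 x := by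
  simp only [ft, indicator_apply, mem_Ioi, mem_Iio, Pi.one_apply]
  split_ifs <;> norm_num
  linarith

lemma integral_ft {ν : Measure ℝ} [IsFiniteMeasure ν] {τ : ℝ} (hτ : 0 ≤ τ) :
    ∫ x, ft τ x ∂ν = ν.real (Ioi τ) - ν.real (Iio (-τ)) := by
  simp_rw [ft_eq_indicator_sub hτ]
  rw [integral_sub ((integrable_const 1).indicator measurableSet_Ioi)
    ((integrable_const 1).indicator measurableSet_Iio), integral_indicator_one measurableSet_Ioi,
    integral_indicator_one measurableSet_Iio]

lemma integral_ft_sq {ν : Measure ℝ} [IsFiniteMeasure ν] {τ : ℝ} (hτ : 0 ≤ τ) :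
    ∫ x, ft τ x ^ 2 ∂ν = ν.real (Ioi τ) + ν.real (Iio (-τ)) := by
  simp_rw [ft_sq_eq_indicator_add hτ]
  rw [integral_add ((integrable_const 1).indicator measurableSet_Ioi)
    ((integrable_const 1).indicator measurableSet_Iio), integral_indicator_one measurableSet_Ioi,
    integral_indicator_one measurableSet_Iio]

lemma gaussianReal_eq_map_affine (m σ : ℝ) :
    gaussianReal m (σ ^ 2).toNNReal = (gaussianReal 0 1).map (fun x => σ * x + m) := by
  have hcomp : (fun x : ℝ => σ * x + m) = (· + m) ∘ (σ * ·) := rfl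
  rw [hcomp, ← Measure.map_map (by fun_prop) (by fun_prop), gaussianReal_map_const_mul,
    gaussianReal_map_add_const]
  congr 1
  · ring
  · ext; simp [sq_nonneg]

lemma stdNormalCDF_eq_real_Iio (x : ℝ) :
    stdNormalCDF x = (gaussianReal 0 1).real (Iio x) := by
  have := nullSingletonClass_gaussianReal (μ := 0) one_ne_zero
  exact (measureReal_congr Iio_ae_eq_Iic).symm

lemma gaussianReal_real_Iio {σ : ℝ} (hσ : 0 < σ) (m a : ℝ) :
    (gaussianReal m (σ ^ 2).toNNReal).real (Iio a) = stdNormalCDF ((a - m) / σ) := by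
  have hpre : (fun x => σ * x + m) ⁻¹' Iio a = Iio ((a - m) / σ) := by
    ext x
    simp only [mem_preimage, mem_Iio, lt_div_iff₀ hσ]
    constructor <;> intro h <;> linarith
  rw [gaussianReal_eq_map_affine, map_measureReal_apply (by fun_prop) measurableSet_Iio, hpre,
    stdNormalCDF_eq_real_Iio]

lemma gaussianReal_real_Ioi {σ : ℝ} (hσ : 0 < σ) (m a : ℝ) :
    (gaussianReal m (σ ^ 2).toNNReal).real (Ioi a) = stdNormalCDF ((m - a) / σ) := by
  rw [← neg_neg m, ← gaussianReal_map_neg, map_measureReal_apply (by fun_prop) measurableSet_Ioi,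
    show (fun x : ℝ => -x) ⁻¹' Ioi a = Iio (-a) by ext; simp,
    gaussianReal_real_Iio hσ, neg_neg, neg_sub_neg]

lemma ProbabilityTheory.IndepFun.integral_sub_sq {Ω : Type*} [MeasurableSpace Ω]
    {P : Measure Ω} [IsFiniteMeasure P] {f g : Ω → ℝ} (hf : MemLp f 2 P) (hg : MemLp g 2 P)
    (hfg : IndepFun f g P) :
    ∫ ω, (f ω - g ω) ^ 2 ∂P
      = ∫ ω, f ω ^ 2 ∂P + ∫ ω, g ω ^ 2 ∂P - 2 * ((∫ ω, f ω ∂P) * ∫ ω, g ω ∂P) := by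
  have hmul : Integrable (fun ω => 2 * (f ω * g ω)) P :=
    (hfg.integrable_mul (hf.integrable one_le_two) (hg.integrable one_le_two)).const_mul 2
  calc ∫ ω, (f ω - g ω) ^ 2 ∂P
      = ∫ ω, f ω ^ 2 - 2 * (f ω * g ω) + g ω ^ 2 ∂P := by congr 1; ext ω; ring
    _ = ∫ ω, f ω ^ 2 ∂P - ∫ ω, 2 * (f ω * g ω) ∂P + ∫ ω, g ω ^ 2 ∂P := by
      rw [integral_add (f := fun ω => f ω ^ 2 - 2 * (f ω * g ω)) (hf.integrable_sq.sub hmul)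
          hg.integrable_sq,
        integral_sub hf.integrable_sq hmul]
    _ = _ := by
      rw [integral_const_mul, hfg.integral_fun_mul_eq_mul_integral hf.1 hg.1]
      ring

lemma aemeasurable_of_map_eq_gaussianReal {Ω : Type*} [MeasurableSpace Ω] {P : Measure Ω}
    {Z : Ω → ℝ} {m : ℝ} {v : NNReal} (hZ : P.map Z = gaussianReal m v) : AEMeasurable Z P :=
  .of_map_ne_zero (hZ ▸ IsProbabilityMeasure.ne_zero _)

lemma memLp_ft_comp {Ω : Type*} [MeasurableSpace Ω] {P : Measure Ω} [IsFiniteMeasure P]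
    {Z : Ω → ℝ} (hZ : AEMeasurable Z P) (τ : ℝ) (p : ENNReal) :
    MemLp (fun ω => ft τ (Z ω)) p P :=
  .of_bound ((measurable_ft τ).comp_aemeasurable hZ).aestronglyMeasurable 1
    (ae_of_all _ fun ω => abs_ft_le_one τ (Z ω))

section GaussianQuantization

variable {Ω : Type*} [MeasurableSpace Ω] {P : Measure Ω} {σ τ m : ℝ} {Z : Ω → ℝ}

lemma integral_ft_of_map_eq_gaussianReal (hσ : 0 < σ) (hτ : 0 ≤ τ)
    (hZ : P.map Z = gaussianReal m (σ ^ 2).toNNReal) :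
    ∫ ω, ft τ (Z ω) ∂P = stdNormalCDF ((-τ + m) / σ) - stdNormalCDF ((-τ - m) / σ) := by
  rw [← integral_map (aemeasurable_of_map_eq_gaussianReal hZ)
    (measurable_ft τ).aestronglyMeasurable, hZ, integral_ft hτ, gaussianReal_real_Ioi hσ,
    gaussianReal_real_Iio hσ, neg_add_eq_sub]

lemma integral_ft_sq_of_map_eq_gaussianReal (hσ : 0 < σ) (hτ : 0 ≤ τ)
    (hZ : P.map Z = gaussianReal m (σ ^ 2).toNNReal) :
    ∫ ω, ft τ (Z ω) ^ 2 ∂P = stdNormalCDF ((-τ + m) / σ) + stdNormalCDF ((-τ - m) / σ) := by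
  rw [← integral_map (f := fun x => ft τ x ^ 2) (aemeasurable_of_map_eq_gaussianReal hZ)
    ((measurable_ft τ).pow_const 2).aestronglyMeasurable, hZ, integral_ft_sq hτ,
    gaussianReal_real_Ioi hσ, gaussianReal_real_Iio hσ, neg_add_eq_sub]

lemma integral_sq_sub_ft_of_indepFun [IsFiniteMeasure P] {W : Ω → ℝ} {m' : ℝ} (hσ : 0 < σ)
    (hτ : 0 ≤ τ) (hZ : P.map Z = gaussianReal m (σ ^ 2).toNNReal)
    (hW : P.map W = gaussianReal m' (σ ^ 2).toNNReal) (hZW : IndepFun Z W P) :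
    ∫ ω, (ft τ (Z ω) - ft τ (W ω)) ^ 2 ∂P
      = (stdNormalCDF ((-τ + m) / σ) + stdNormalCDF ((-τ - m) / σ))
        + (stdNormalCDF ((-τ + m') / σ) + stdNormalCDF ((-τ - m') / σ))
        - 2 * ((stdNormalCDF ((-τ + m) / σ) - stdNormalCDF ((-τ - m) / σ))
          * (stdNormalCDF ((-τ + m') / σ) - stdNormalCDF ((-τ - m') / σ))) := by
  rw [(hZW.comp (measurable_ft τ) (measurable_ft τ)).integral_sub_sq
      (memLp_ft_comp (aemeasurable_of_map_eq_gaussianReal hZ) τ 2)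
      (memLp_ft_comp (aemeasurable_of_map_eq_gaussianReal hW) τ 2),
    integral_ft_sq_of_map_eq_gaussianReal hσ hτ hZ,
    integral_ft_sq_of_map_eq_gaussianReal hσ hτ hW,
    integral_ft_of_map_eq_gaussianReal hσ hτ hZ, integral_ft_of_map_eq_gaussianReal hσ hτ hW]

end GaussianQuantization

theorem discrimination_of_ternary_quantized_data_general
    {Ω : Type*} [MeasureSpace Ω] [IsProbabilityMeasure (ℙ : Measure Ω)]
    (μ σ τ : ℝ) (hσpos : 0 < σ) (hτ : 0 ≤ τ)
    (X₁ X₂ Y₁ Y₂ : Ω → ℝ)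
    (hX₁ : Measure.map X₁ ℙ = gaussianReal μ (Real.toNNReal (σ ^ 2)))
    (hX₂ : Measure.map X₂ ℙ = gaussianReal μ (Real.toNNReal (σ ^ 2)))
    (hY₁ : Measure.map Y₁ ℙ = gaussianReal (-μ) (Real.toNNReal (σ ^ 2)))
    (hY₂ : Measure.map Y₂ ℙ = gaussianReal (-μ) (Real.toNNReal (σ ^ 2)))
    (hindep : iIndepFun ![X₁, X₂, Y₁, Y₂] ℙ)
    (α β : ℝ)
    (hα : α = stdNormalCDF ((-τ - μ) / σ))
    (hβ : β = stdNormalCDF ((-τ + μ) / σ)) :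
    (∫ ω, (ft τ (X₁ ω) - ft τ (Y₁ ω)) ^ 2 ∂ℙ) /
        ((∫ ω, (ft τ (X₁ ω) - ft τ (X₂ ω)) ^ 2 ∂ℙ) +
          (∫ ω, (ft τ (Y₁ ω) - ft τ (Y₂ ω)) ^ 2 ∂ℙ))
      = (α + α ^ 2 - 2 * α * β + β + β ^ 2)
          / (2 * (α - α ^ 2 + 2 * α * β + β - β ^ 2)) := by
  have hX₁Y₁ : IndepFun X₁ Y₁ := hindep.indepFun (i := 0) (j := 2) (by decide)
  have hX₁X₂ : IndepFun X₁ X₂ := hindep.indepFun (i := 0) (j := 1) (by decide)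
  have hY₁Y₂ : IndepFun Y₁ Y₂ := hindep.indepFun (i := 2) (j := 3) (by decide)
  rw [integral_sq_sub_ft_of_indepFun hσpos hτ hX₁ hY₁ hX₁Y₁,
    integral_sq_sub_ft_of_indepFun hσpos hτ hX₁ hX₂ hX₁X₂,
    integral_sq_sub_ft_of_indepFun hσpos hτ hY₁ hY₂ hY₁Y₂,
    ← sub_eq_add_neg, sub_neg_eq_add, ← hα, ← hβ, eq_comm, ← mul_div_mul_left _ _ two_ne_zero]
  congr 1 <;> ring

/-- The discrimination of the ternary quantized Gaussian data equals
`(α + α² - 2αβ + β + β²)/(2(α - α² + 2αβ + β - β²))` where `α = Φ((-τ-μ)/σ)`,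
`β = Φ((-τ+μ)/σ)`. -/
theorem discrimination_of_ternary_quantized_data
    {Ω : Type*} [MeasureSpace Ω] [IsProbabilityMeasure (ℙ : Measure Ω)]
    (μ σ τ : ℝ) (hσpos : 0 < σ) (hτ : 0 ≤ τ)
    (X₁ X₂ Y₁ Y₂ : Ω → ℝ)
    (hmX₁ : Measurable X₁) (hmX₂ : Measurable X₂)
    (hmY₁ : Measurable Y₁) (hmY₂ : Measurable Y₂)
    (hX₁ : Measure.map X₁ ℙ = gaussianReal μ (Real.toNNReal (σ ^ 2)))
    (hX₂ : Measure.map X₂ ℙ = gaussianReal μ (Real.toNNReal (σ ^ 2)))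
    (hY₁ : Measure.map Y₁ ℙ = gaussianReal (-μ) (Real.toNNReal (σ ^ 2)))
    (hY₂ : Measure.map Y₂ ℙ = gaussianReal (-μ) (Real.toNNReal (σ ^ 2)))
    (hindep : iIndepFun ![X₁, X₂, Y₁, Y₂] ℙ)
    (α β : ℝ)
    (hα : α = stdNormalCDF ((-τ - μ) / σ))
    (hβ : β = stdNormalCDF ((-τ + μ) / σ)) :
    (∫ ω, (ft τ (X₁ ω) - ft τ (Y₁ ω)) ^ 2 ∂ℙ) /
        ((∫ ω, (ft τ (X₁ ω) - ft τ (X₂ ω)) ^ 2 ∂ℙ) +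
          (∫ ω, (ft τ (Y₁ ω) - ft τ (Y₂ ω)) ^ 2 ∂ℙ))
      = (α + α ^ 2 - 2 * α * β + β + β ^ 2)
          / (2 * (α - α ^ 2 + 2 * α * β + β - β ^ 2)) :=
  discrimination_of_ternary_quantized_data_general μ σ τ hσpos hτ X₁ X₂ Y₁ Y₂ hX₁ hX₂ hY₁ hY₂ hindep
    α β hα hβ
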